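/- Let (Y, C, X) be random variables with Y, C nonnegative real-valued and X taking values in R^d. Let G(t) = P(C > t) be the survival function of C, and suppose C and Y are independent, P(Y ≤ C | X, Y) = P(Y ≤ C | Y), and G(Y) > 0 almost surely. Set Z = min(Y, C) and δ = 1_{Y ≤ C}. Then for any bounded measurable ψ : R → R, E[δ ψ(Z) / G(Z) | X] = E[ψ(Y) | X] almost surely. -/

import Mathlib

/-! On `{Y ≤ C}` we have `Z = Y`, so `δ ψ(Z) / G(Z) = w δ` with `w = ψ(Y) / G(Y)`, which is
`σ(X, Y)`-measurable. Conditioning first on `σ(X, Y)`, pulling `w` out and using the censoring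
assumption reduces the identity to `E[δ | Y] = G(Y)`. By independence (freezing `Y`),
`E[δ | Y] = P(C ≥ y)` at `y = Y`, and `P(C ≥ y) = P(C > y) = G(y)` by left-continuity of `G`.
The same computation applied to `|w| δ` gives `E[|w| δ] = E[|ψ(Y)|] < ∞`, so the weighted
variable is integrable although `1 / G(Y)` need not be. -/

open MeasureTheory ProbabilityTheory Set

lemma measure_Ici_toReal_eq_of_continuousWithinAt {ν : Measure ℝ} [IsFiniteMeasure ν]
    {G : ℝ → ℝ} (hG : ∀ t, G t = (ν (Ioi t)).toReal) {y : ℝ}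
    (hGy : ContinuousWithinAt G (Iio y) y) :
    (ν (Ici y)).toReal = G y := by
  refine le_antisymm (ge_of_tendsto hGy (eventually_nhdsWithin_of_forall fun t ht => ?_)) ?_
  · rw [hG]
    exact ENNReal.toReal_mono (measure_ne_top ν _) (measure_mono (Ici_subset_Ioi.2 ht))
  · rw [hG]
    exact ENNReal.toReal_mono (measure_ne_top ν _) (measure_mono Ioi_subset_Ici_self)

namespace ProbabilityTheory

variable {Ω α β : Type*} [MeasurableSpace Ω] [MeasurableSpace α] [MeasurableSpace β]
  {μ : Measure Ω} [IsFiniteMeasure μ] {Y : Ω → α} {C : Ω → β}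

lemma IndepFun.lintegral_comp_eq (hind : IndepFun Y C μ) (hY : Measurable Y)
    (hC : Measurable C) {f : α × β → ENNReal} (hf : Measurable f) :
    ∫⁻ ω, f (Y ω, C ω) ∂μ = ∫⁻ y, ∫⁻ c, f (y, c) ∂(μ.map C) ∂(μ.map Y) := by
  rw [← lintegral_prod _ hf.aemeasurable,
    ← (indepFun_iff_map_prod_eq_prod_map_map hY.aemeasurable hC.aemeasurable).1 hind,
    lintegral_map hf (hY.prodMk hC)]

lemma IndepFun.condExp_comp_ae_eq (hind : IndepFun Y C μ) (hY : Measurable Y)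
    (hC : Measurable C) {f : α × β → ℝ} (hfm : StronglyMeasurable f)
    (hfi : Integrable f ((μ.map Y).prod (μ.map C))) :
    μ[fun ω => f (Y ω, C ω) | MeasurableSpace.comap Y inferInstance]
      =ᵐ[μ] fun ω => ∫ c, f (Y ω, c) ∂(μ.map C) := by
  have hlaw := (indepFun_iff_map_prod_eq_prod_map_map hY.aemeasurable hC.aemeasurable).1 hind
  have hYC : Measurable fun ω => (Y ω, C ω) := hY.prodMk hC
  have hF : StronglyMeasurable fun y => ∫ c, f (y, c) ∂(μ.map C) := hfm.integral_prod_right'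
  have hfi' : Integrable (fun ω => f (Y ω, C ω)) μ := by
    rw [← hlaw] at hfi
    exact hfi.comp_measurable hYC
  have hFi : Integrable (fun ω => ∫ c, f (Y ω, c) ∂(μ.map C)) μ :=
    hfi.integral_prod_left.comp_measurable hY
  refine (ae_eq_condExp_of_forall_setIntegral_eq hY.comap_le hfi'
    (fun s _ _ => hFi.integrableOn) ?_
    (hF.comp_measurable (comap_measurable Y)).aestronglyMeasurable).symm
  rintro _ ⟨B, hB, rfl⟩ -
  calc ∫ ω in Y ⁻¹' B, ∫ c, f (Y ω, c) ∂(μ.map C) ∂μ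
      = ∫ y in B, ∫ c, f (y, c) ∂(μ.map C) ∂(μ.map Y) :=
        (setIntegral_map hB hF.aestronglyMeasurable hY.aemeasurable).symm
    _ = ∫ p in B ×ˢ univ, f p ∂((μ.map Y).prod (μ.map C)) := by
        rw [setIntegral_prod _ hfi.integrableOn, Measure.restrict_univ]
    _ = ∫ ω in Y ⁻¹' B, f (Y ω, C ω) ∂μ := by
        rw [← hlaw, setIntegral_map (hB.prod MeasurableSet.univ)
          (hlaw ▸ hfm.aestronglyMeasurable) hYC.aemeasurable, mk_preimage_prod, preimage_univ,
          inter_univ]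

end ProbabilityTheory

section Censoring

variable {Ω : Type*} [MeasurableSpace Ω] {μ : Measure Ω} [IsFiniteMeasure μ] {Y C : Ω → ℝ}
  {G : ℝ → ℝ}

lemma map_Ici_toReal_eq_survival (hC : Measurable C) (hG : ∀ t, G t = (μ {ω | t < C ω}).toReal)
    {y : ℝ} (hGy : ContinuousWithinAt G (Iio y) y) :
    ((μ.map C) (Ici y)).toReal = G y :=
  measure_Ici_toReal_eq_of_continuousWithinAt
    (fun t => by rw [hG, Measure.map_apply hC measurableSet_Ioi]; rfl) hGy

lemma condExp_indicator_le_ae_eq_survival (hind : IndepFun Y C μ) (hY : Measurable Y)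
    (hC : Measurable C) (hGC : ∀ y, ((μ.map C) (Ici y)).toReal = G y) :
    μ[fun ω => if Y ω ≤ C ω then (1 : ℝ) else 0 | MeasurableSpace.comap Y inferInstance]
      =ᵐ[μ] fun ω => G (Y ω) := by
  have hfm : StronglyMeasurable fun p : ℝ × ℝ => if p.1 ≤ p.2 then (1 : ℝ) else 0 :=
    (Measurable.ite (measurableSet_le measurable_fst measurable_snd) measurable_const
      measurable_const).stronglyMeasurable
  have hfi : Integrable (fun p : ℝ × ℝ => if p.1 ≤ p.2 then (1 : ℝ) else 0)
      ((μ.map Y).prod (μ.map C)) :=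
    .of_bound hfm.aestronglyMeasurable 1 (.of_forall fun p => by split_ifs <;> simp)
  refine (hind.condExp_comp_ae_eq hY hC hfm hfi).trans (.of_forall fun ω => ?_)
  have hite : (fun c => if Y ω ≤ c then (1 : ℝ) else 0) = (Ici (Y ω)).indicator 1 := by
    ext c
    simp [indicator_apply]
  simp only [hite, integral_indicator_one measurableSet_Ici, measureReal_def, hGC]

lemma integrable_div_mul_indicator_le (hind : IndepFun Y C μ) (hY : Measurable Y)
    (hC : Measurable C) (hGm : Measurable G) (hGC : ∀ y, ((μ.map C) (Ici y)).toReal = G y)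
    (hGY : ∀ᵐ ω ∂μ, 0 < G (Y ω)) {g : ℝ → ℝ} (hgm : Measurable g)
    (hg : Integrable (fun ω => g (Y ω)) μ) :
    Integrable (fun ω => g (Y ω) / G (Y ω) * if Y ω ≤ C ω then 1 else 0) μ := by
  have hfm : Measurable fun p : ℝ × ℝ => g p.1 / G p.1 * if p.1 ≤ p.2 then 1 else 0 :=
    ((hgm.comp measurable_fst).div (hGm.comp measurable_fst)).mul
      (Measurable.ite (measurableSet_le measurable_fst measurable_snd) measurable_const
        measurable_const)
  have hGpos : ∀ᵐ y ∂(μ.map Y), 0 < G y :=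
    (ae_map_iff hY.aemeasurable (measurableSet_lt measurable_const hGm)).2 hGY
  have hlin : ∫⁻ ω, ‖g (Y ω) / G (Y ω) * if Y ω ≤ C ω then 1 else 0‖ₑ ∂μ
      = ∫⁻ ω, ‖g (Y ω)‖ₑ ∂μ := by
    rw [hind.lintegral_comp_eq hY hC hfm.enorm,
      ← lintegral_map (f := fun y => ‖g y‖ₑ) hgm.enorm hY]
    refine lintegral_congr_ae (hGpos.mono fun y hy => ?_)
    calc ∫⁻ c, ‖g y / G y * if y ≤ c then 1 else 0‖ₑ ∂(μ.map C)
        = ∫⁻ c, (Ici y).indicator (fun _ => ‖g y / G y‖ₑ) c ∂(μ.map C) := by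
          congr 1
          ext c
          by_cases h : y ≤ c <;> simp [h]
      _ = ‖g y / G y‖ₑ * ‖G y‖ₑ := by
          rw [lintegral_indicator measurableSet_Ici, setLIntegral_const,
            Real.enorm_of_nonneg hy.le, ← hGC y, ENNReal.ofReal_toReal (measure_ne_top _ _)]
      _ = ‖g y‖ₑ := by rw [← enorm_mul, div_mul_cancel₀ _ hy.ne']
  exact ⟨(hfm.comp (hY.prodMk hC)).aestronglyMeasurable,
    (hasFiniteIntegral_def _ _).2 (hlin ▸ hg.hasFiniteIntegral)⟩

end Censoring

theorem ipcw_identity_general {Ω : Type*} [MeasurableSpace Ω] (μ : Measure Ω)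
    [IsProbabilityMeasure μ] {d : ℕ}
    (Y C : Ω → ℝ) (X : Ω → (Fin d → ℝ))
    (hY : Measurable Y) (hC : Measurable C) (hX : Measurable X)
    (G : ℝ → ℝ) (hG : ∀ t, G t = (μ {ω | t < C ω}).toReal)
    (hGcont : Continuous G)
    (hind : IndepFun Y C μ)
    (hGYpos : ∀ᵐ ω ∂μ, 0 < G (Y ω))
    -- P(Y ≤ C | X, Y) = P(Y ≤ C | Y)
    (hcond : μ[(fun ω => if Y ω ≤ C ω then (1 : ℝ) else 0) |
        (MeasurableSpace.comap X inferInstance) ⊔ (MeasurableSpace.comap Y inferInstance)]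
      =ᵐ[μ] μ[(fun ω => if Y ω ≤ C ω then (1 : ℝ) else 0) |
        MeasurableSpace.comap Y inferInstance])
    (ψ : ℝ → ℝ) (hψm : Measurable ψ) (hψb : ∃ M, ∀ y, |ψ y| ≤ M) :
    μ[(fun ω => (if Y ω ≤ C ω then (1 : ℝ) else 0) * ψ (min (Y ω) (C ω)) /
        G (min (Y ω) (C ω))) | MeasurableSpace.comap X inferInstance]
      =ᵐ[μ] μ[(fun ω => ψ (Y ω)) | MeasurableSpace.comap X inferInstance] := by
  obtain ⟨M, hM⟩ := hψb
  set δ : Ω → ℝ := fun ω => if Y ω ≤ C ω then 1 else 0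
  set w : Ω → ℝ := fun ω => ψ (Y ω) / G (Y ω)
  have hGC : ∀ y, ((μ.map C) (Ici y)).toReal = G y := fun y =>
    map_Ici_toReal_eq_survival hC hG hGcont.continuousWithinAt
  have hψY : Integrable (fun ω => ψ (Y ω)) μ :=
    .of_bound (hψm.comp hY).aestronglyMeasurable M (.of_forall fun ω => hM (Y ω))
  have hδ : Integrable δ μ :=
    .of_bound (Measurable.ite (measurableSet_le hY hC) measurable_const
      measurable_const).aestronglyMeasurable 1
      (.of_forall fun ω => by by_cases Y ω ≤ C ω <;> simp [δ, *])
  have hwδ : Integrable (w * δ) μ :=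
    integrable_div_mul_indicator_le hind hY hC hGcont.measurable hGC hGYpos hψm hψY
  have hw : StronglyMeasurable[MeasurableSpace.comap X inferInstance ⊔
      MeasurableSpace.comap Y inferInstance] w := by
    refine Measurable.stronglyMeasurable ?_
    exact ((hψm.comp (comap_measurable Y)).div (hGcont.measurable.comp (comap_measurable Y))).mono
      le_sup_right le_rfl
  have hweight : (fun ω => δ ω * ψ (min (Y ω) (C ω)) / G (min (Y ω) (C ω))) = w * δ := by
    ext ω
    by_cases h : Y ω ≤ C ω <;> simp [δ, w, h]
  rw [hweight]
  refine (condExp_condExp_of_le le_sup_left (sup_le hX.comap_le hY.comap_le)).symm.trans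
    (condExp_congr_ae ?_)
  filter_upwards [condExp_mul_of_stronglyMeasurable_left hw hwδ hδ, hcond,
    condExp_indicator_le_ae_eq_survival hind hY hC hGC, hGYpos] with ω hpull hXY hδY hpos
  rw [hpull, Pi.mul_apply, hXY, hδY, div_mul_cancel₀ _ hpos.ne']

/-- The IPCW identity (2.1): under the censoring assumptions,
`E[δ ψ(Z) / G(Z) | X] = E[ψ(Y) | X]` a.s. -/
theorem ipcw_identity {Ω : Type*} [MeasurableSpace Ω] (μ : Measure Ω)
    [IsProbabilityMeasure μ] {d : ℕ}
    (Y C : Ω → ℝ) (X : Ω → (Fin d → ℝ))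
    (hY : Measurable Y) (hC : Measurable C) (hX : Measurable X)
    (hY0 : ∀ ω, 0 ≤ Y ω) (hC0 : ∀ ω, 0 ≤ C ω)
    (G : ℝ → ℝ) (hG : ∀ t, G t = (μ {ω | t < C ω}).toReal)
    (hGcont : Continuous G)
    (hind : IndepFun Y C μ)
    (hGYpos : ∀ᵐ ω ∂μ, 0 < G (Y ω))
    -- P(Y ≤ C | X, Y) = P(Y ≤ C | Y)
    (hcond : μ[(fun ω => if Y ω ≤ C ω then (1 : ℝ) else 0) |
        (MeasurableSpace.comap X inferInstance) ⊔ (MeasurableSpace.comap Y inferInstance)]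
      =ᵐ[μ] μ[(fun ω => if Y ω ≤ C ω then (1 : ℝ) else 0) |
        MeasurableSpace.comap Y inferInstance])
    (ψ : ℝ → ℝ) (hψm : Measurable ψ) (hψb : ∃ M, ∀ y, |ψ y| ≤ M) :
    μ[(fun ω => (if Y ω ≤ C ω then (1 : ℝ) else 0) * ψ (min (Y ω) (C ω)) /
        G (min (Y ω) (C ω))) | MeasurableSpace.comap X inferInstance]
      =ᵐ[μ] μ[(fun ω => ψ (Y ω)) | MeasurableSpace.comap X inferInstance] :=
  ipcw_identity_general μ Y C X hY hC hX G hG hGcont hind hGYpos hcond ψ hψm hψb
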